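/- Let P ⊂ ℝ^{1+n} be a polytope, let v₁, …, v_N be the vertices of P lying on its upper hull P^max, and for each such vertex define the truncated normal cone N′_P(v) := {c ∈ N_P(v) : c₁ ≥ 0}, with ω(N′_P(v)) > 0 for every vertex on the upper hull. Let g₁, …, g_K be independent standard Gaussian vectors in ℝ^{1+n}, each replaced by its negation whenever its first coordinate is negative (so that all samples have nonnegative first coordinate). Set Ñ := log(1 / max_k(1 − ω(N′_P(v_k)))). Then the probability that some upper-hull vertex v_k is not the maximizer of ⟨g_j, ·⟩ over P for any j ∈ [K] is at most N · max_k (1 − ω(N′_P(v_k)))^K; in particular, if K ≥ (1/Ñ) log(N/δ), then with probability at least 1 − δ every vertex of P^max is recorded as a maximizer of some sampled functional. -/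

import Mathlib

open scoped RealInnerProductSpace
open MeasureTheory

/-- The standard inner product pairing on `ℝ^{1+n} = ℝ × ℝⁿ`. -/
noncomputable def pairing {n : ℕ} (u w : ℝ × EuclideanSpace ℝ (Fin n)) : ℝ :=
  u.1 * w.1 + ⟪u.2, w.2⟫

/-- The normal cone to a set `P ⊆ ℝ^{1+n}` at a point `v`. -/
def normalCone {n : ℕ} (P : Set (ℝ × EuclideanSpace ℝ (Fin n)))
    (v : ℝ × EuclideanSpace ℝ (Fin n)) : Set (ℝ × EuclideanSpace ℝ (Fin n)) :=
  {c | ∀ z ∈ P, pairing c (z - v) ≤ 0}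

/-- The truncated normal cone `N′_P(v) = {c ∈ N_P(v) : c₁ ≥ 0}`. -/
def truncNormalCone {n : ℕ} (P : Set (ℝ × EuclideanSpace ℝ (Fin n)))
    (v : ℝ × EuclideanSpace ℝ (Fin n)) : Set (ℝ × EuclideanSpace ℝ (Fin n)) :=
  {c ∈ normalCone P v | 0 ≤ c.1}

/-- The upper hull of a set `P ⊆ ℝ^{1+n}` (coordinates written `(λ, x)`). -/
def upperHull {n : ℕ} (P : Set (ℝ × EuclideanSpace ℝ (Fin n))) :
    Set (ℝ × EuclideanSpace ℝ (Fin n)) :=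
  {p ∈ P | ∀ t : ℝ, (t, p.2) ∈ P → t ≤ p.1}

/-- The standard Gaussian measure on `ℝⁿ`. -/
noncomputable def stdGaussian (n : ℕ) : Measure (EuclideanSpace ℝ (Fin n)) :=
  (Measure.pi fun _ : Fin n => ProbabilityTheory.gaussianReal 0 1).map
    (EuclideanSpace.equiv (Fin n) ℝ).symm

instance (n : ℕ) : IsProbabilityMeasure (stdGaussian n) := by
  unfold stdGaussian
  exact Measure.isProbabilityMeasure_map
    ((EuclideanSpace.equiv (Fin n) ℝ).symm.continuous.measurable.aemeasurable)

/-- The standard Gaussian measure on `ℝ^{1+n} = ℝ × ℝⁿ`. -/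
noncomputable def stdGaussianProd (n : ℕ) : Measure (ℝ × EuclideanSpace ℝ (Fin n)) :=
  (ProbabilityTheory.gaussianReal 0 1).prod (stdGaussian n)

instance (n : ℕ) : IsProbabilityMeasure (stdGaussianProd n) := by
  unfold stdGaussianProd
  infer_instance

/-- The solid angle of a cone `K ⊆ ℝ^{1+n}`: `ω(K) = P(g ∈ K)` for a standard
Gaussian `g`. -/
noncomputable def solidAngle {n : ℕ} (K : Set (ℝ × EuclideanSpace ℝ (Fin n))) : ℝ :=
  (stdGaussianProd n K).toReal

/-- Replace a sample by its negation whenever its first coordinate is negative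
(this preserves the standard Gaussian distribution). -/
noncomputable def flipSample {n : ℕ} (g : ℝ × EuclideanSpace ℝ (Fin n)) :
    ℝ × EuclideanSpace ℝ (Fin n) :=
  if g.1 < 0 then -g else g

/-! A flipped sample lands in `N_P(v)` whenever the raw Gaussian sample lies in `N′_P(v)`, so a
fixed vertex `v` is missed by all `K` independent samples with probability at most
`(1 - ω(N′_P(v)))^K`, and a union bound over the `N` vertices gives the first claim. The second
is the arithmetic `N q^K ≤ δ` for `K ≥ log(N/δ) / log(1/q)`, where `0 < q < 1` because each
`N′_P(v)` has positive solid angle and misses the half-space `{c₁ < 0}`, which has positive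
Gaussian measure. -/

section Sampling

variable {α ι : Type*} [MeasurableSpace α] [Fintype ι] (μ : Measure α) (K : ℕ) (A : ι → Set α)

lemma measure_pi_exists_forall_notMem_le [SigmaFinite μ] :
    Measure.pi (fun _ : Fin K => μ) {g | ∃ k, ∀ j, g j ∉ A k} ≤ ∑ k, μ (A k)ᶜ ^ K := by
  have hunion : {g : Fin K → α | ∃ k, ∀ j, g j ∉ A k} = ⋃ k, Set.univ.pi fun _ => (A k)ᶜ := by
    ext g
    simp
  calc Measure.pi (fun _ : Fin K => μ) {g | ∃ k, ∀ j, g j ∉ A k}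
      ≤ ∑ k, Measure.pi (fun _ : Fin K => μ) (Set.univ.pi fun _ => (A k)ᶜ) :=
        hunion ▸ measure_iUnion_fintype_le _ _
    _ = ∑ k, μ (A k)ᶜ ^ K := by simp [Measure.pi_pi]

variable [IsProbabilityMeasure μ] {q : ℝ}

lemma measureReal_pi_exists_forall_notMem_le (hq : ∀ k, μ.real (A k)ᶜ ≤ q) :
    (Measure.pi fun _ : Fin K => μ).real {g | ∃ k, ∀ j, g j ∉ A k} ≤ Fintype.card ι * q ^ K := by
  calc (Measure.pi fun _ : Fin K => μ).real {g | ∃ k, ∀ j, g j ∉ A k}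
      ≤ (∑ k, μ (A k)ᶜ ^ K).toReal :=
        ENNReal.toReal_mono (ENNReal.sum_ne_top.2 fun _ _ => by finiteness)
          (measure_pi_exists_forall_notMem_le μ K A)
    _ = ∑ k, μ.real (A k)ᶜ ^ K := by
        rw [ENNReal.toReal_sum fun _ _ => by finiteness]
        simp [measureReal_def]
    _ ≤ ∑ _k : ι, q ^ K := by
        gcongr with k
        exact hq k
    _ = Fintype.card ι * q ^ K := by simp

lemma one_sub_le_measureReal_pi_forall_exists_mem (hq : ∀ k, μ.real (A k)ᶜ ≤ q) :
    1 - Fintype.card ι * q ^ K ≤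
      (Measure.pi fun _ : Fin K => μ).real {g | ∀ k, ∃ j, g j ∈ A k} := by
  have hcompl : {g : Fin K → α | ∀ k, ∃ j, g j ∈ A k} = {g | ∃ k, ∀ j, g j ∉ A k}ᶜ := by
    ext g
    simp
  have hcover := measureReal_union_le (μ := Measure.pi fun _ : Fin K => μ)
    {g | ∃ k, ∀ j, g j ∉ A k} {g | ∃ k, ∀ j, g j ∉ A k}ᶜ
  rw [Set.union_compl_self, probReal_univ] at hcover
  rw [hcompl]
  linarith [measureReal_pi_exists_forall_notMem_le μ K A hq]

end Sampling

lemma mul_pow_le_of_log_div_le {N δ q : ℝ} {K : ℕ} (hN : 0 < N) (hδ : 0 < δ) (hq₀ : 0 < q)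
    (hq₁ : q < 1) (hK : 1 / Real.log (1 / q) * Real.log (N / δ) ≤ K) : N * q ^ K ≤ δ := by
  have hlog : 0 < Real.log (1 / q) := Real.log_pos (one_lt_one_div hq₀ hq₁)
  have hlog_le : Real.log (N / δ) ≤ Real.log ((1 / q) ^ K) := by
    rw [Real.log_pow]
    rwa [one_div_mul_eq_div, div_le_iff₀ hlog] at hK
  have hratio : N / δ ≤ (1 / q) ^ K :=
    (Real.log_le_log_iff (div_pos hN hδ) (by positivity)).1 hlog_le
  rwa [div_le_iff₀ hδ, one_div_pow, one_div_mul_eq_div, le_div_iff₀ (by positivity)] at hratio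

lemma stdGaussianProd_fst_neg_pos (n : ℕ) : 0 < stdGaussianProd n {c | c.1 < 0} := by
  have h : {c : ℝ × EuclideanSpace ℝ (Fin n) | c.1 < 0} = Set.Iio 0 ×ˢ Set.univ := by
    ext c
    simp
  rw [stdGaussianProd, h, Measure.prod_prod, measure_univ, mul_one, pos_iff_ne_zero]
  intro h0
  simpa [Real.volume_Iio] using
    ProbabilityTheory.gaussianReal_absolutelyContinuous' 0 one_ne_zero h0

section Cones

variable {n : ℕ}

lemma isClosed_normalCone (P : Set (ℝ × EuclideanSpace ℝ (Fin n)))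
    (v : ℝ × EuclideanSpace ℝ (Fin n)) : IsClosed (normalCone P v) := by
  have : normalCone P v = ⋂ z ∈ P, {c | pairing c (z - v) ≤ 0} := by
    ext c
    simp [normalCone]
  rw [this]
  exact isClosed_biInter fun z _ => isClosed_le (by unfold pairing; fun_prop) continuous_const

lemma isClosed_truncNormalCone (P : Set (ℝ × EuclideanSpace ℝ (Fin n)))
    (v : ℝ × EuclideanSpace ℝ (Fin n)) : IsClosed (truncNormalCone P v) :=
  (isClosed_normalCone P v).inter (isClosed_le continuous_const continuous_fst)

lemma truncNormalCone_subset_preimage_flipSample (P : Set (ℝ × EuclideanSpace ℝ (Fin n)))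
    (v : ℝ × EuclideanSpace ℝ (Fin n)) :
    truncNormalCone P v ⊆ flipSample ⁻¹' normalCone P v := by
  intro c ⟨hc, hc₁⟩
  simpa [flipSample, not_lt.2 hc₁] using hc

lemma measureReal_compl_preimage_flipSample_normalCone_le
    (P : Set (ℝ × EuclideanSpace ℝ (Fin n))) (v : ℝ × EuclideanSpace ℝ (Fin n)) :
    (stdGaussianProd n).real (flipSample ⁻¹' normalCone P v)ᶜ ≤
      1 - solidAngle (truncNormalCone P v) := by
  calc (stdGaussianProd n).real (flipSample ⁻¹' normalCone P v)ᶜ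
      ≤ (stdGaussianProd n).real (truncNormalCone P v)ᶜ :=
        measureReal_mono (Set.compl_subset_compl.2
          (truncNormalCone_subset_preimage_flipSample P v))
    _ = 1 - solidAngle (truncNormalCone P v) :=
        probReal_compl_eq_one_sub (isClosed_truncNormalCone P v).measurableSet

lemma solidAngle_lt_one_of_subset_fst_nonneg {C : Set (ℝ × EuclideanSpace ℝ (Fin n))}
    (hC : C ⊆ {c | 0 ≤ c.1}) : solidAngle C < 1 := by
  have hhalf : {c : ℝ × EuclideanSpace ℝ (Fin n) | 0 ≤ c.1} = {c | c.1 < 0}ᶜ := by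
    ext c
    simp
  calc solidAngle C ≤ (stdGaussianProd n).real {c | c.1 < 0}ᶜ := measureReal_mono (hhalf ▸ hC)
    _ = 1 - (stdGaussianProd n).real {c | c.1 < 0} :=
        probReal_compl_eq_one_sub (measurableSet_lt measurable_fst measurable_const)
    _ < 1 := sub_lt_self 1 (ENNReal.toReal_pos (stdGaussianProd_fst_neg_pos n).ne' (by finiteness))

lemma solidAngle_truncNormalCone_lt_one (P : Set (ℝ × EuclideanSpace ℝ (Fin n)))
    (v : ℝ × EuclideanSpace ℝ (Fin n)) : solidAngle (truncNormalCone P v) < 1 :=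
  solidAngle_lt_one_of_subset_fst_nonneg fun _ hc => hc.2

end Cones

theorem sampling_records_upper_hull_vertices_general (n N K : ℕ) [NeZero N]
    (δ : ℝ) (hδ : 0 < δ)
    (S : Finset (ℝ × EuclideanSpace ℝ (Fin n)))
    (v : Fin N → ℝ × EuclideanSpace ℝ (Fin n))
    (hω : ∀ k : Fin N, 0 < solidAngle (truncNormalCone
      (convexHull ℝ (S : Set (ℝ × EuclideanSpace ℝ (Fin n)))) (v k))) :
    (((Measure.pi fun _ : Fin K => stdGaussianProd n)
        {g : Fin K → ℝ × EuclideanSpace ℝ (Fin n) | ∃ k : Fin N, ∀ j : Fin K,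
          flipSample (g j) ∉ normalCone
            (convexHull ℝ (S : Set (ℝ × EuclideanSpace ℝ (Fin n)))) (v k)}).toReal
      ≤ N * (Finset.univ.sup' Finset.univ_nonempty (fun k : Fin N =>
          1 - solidAngle (truncNormalCone
            (convexHull ℝ (S : Set (ℝ × EuclideanSpace ℝ (Fin n)))) (v k)))) ^ K) ∧
    ((K : ℝ) ≥
        (1 / Real.log (1 / Finset.univ.sup' Finset.univ_nonempty (fun k : Fin N =>
          1 - solidAngle (truncNormalCone
            (convexHull ℝ (S : Set (ℝ × EuclideanSpace ℝ (Fin n)))) (v k))))) *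
          Real.log (N / δ) →
      1 - δ ≤ ((Measure.pi fun _ : Fin K => stdGaussianProd n)
        {g : Fin K → ℝ × EuclideanSpace ℝ (Fin n) | ∀ k : Fin N, ∃ j : Fin K,
          flipSample (g j) ∈ normalCone
            (convexHull ℝ (S : Set (ℝ × EuclideanSpace ℝ (Fin n)))) (v k)}).toReal) := by
  set P := convexHull ℝ (S : Set (ℝ × EuclideanSpace ℝ (Fin n)))
  set q := Finset.univ.sup' Finset.univ_nonempty
    (fun k : Fin N => 1 - solidAngle (truncNormalCone P (v k)))
  have hle_q : ∀ k, 1 - solidAngle (truncNormalCone P (v k)) ≤ q :=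
    fun k => Finset.le_sup' (fun k => 1 - solidAngle (truncNormalCone P (v k))) (Finset.mem_univ k)
  have hmiss : ∀ k, (stdGaussianProd n).real (flipSample ⁻¹' normalCone P (v k))ᶜ ≤ q :=
    fun k => (measureReal_compl_preimage_flipSample_normalCone_le P (v k)).trans (hle_q k)
  have hbound := measureReal_pi_exists_forall_notMem_le _ K _ hmiss
  have hrecord := one_sub_le_measureReal_pi_forall_exists_mem _ K _ hmiss
  rw [Fintype.card_fin] at hbound hrecord
  refine ⟨hbound, fun hK => ?_⟩
  have hq₀ : 0 < q := (sub_pos.2 (solidAngle_truncNormalCone_lt_one P (v 0))).trans_le (hle_q 0)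
  have hq₁ : q < 1 := (Finset.sup'_lt_iff _).2 fun k _ => sub_lt_self 1 (hω k)
  have hsmall := mul_pow_le_of_log_div_le (Nat.cast_pos.2 (NeZero.pos N)) hδ hq₀ hq₁ hK
  exact (sub_le_sub_left hsmall 1).trans hrecord

/-- Upper-hull vertex sampling: let `P = conv(S) ⊆ ℝ^{1+n}` be a polytope with
upper-hull vertices `v₁, …, v_N`, whose truncated normal cones all have
positive solid angle, and let `g₁, …, g_K` be i.i.d. standard Gaussian samples,
each negated when its first coordinate is negative.  The probability that some
upper-hull vertex `v_k` is not the maximizer of `⟨g_j, ·⟩` over `P` for any `j`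
is at most `N · (max_k (1 − ω(N′_P(v_k))))^K`; consequently, if
`K ≥ (1/Ñ) log(N/δ)` with `Ñ = log(1 / max_k (1 − ω(N′_P(v_k))))`, then with
probability at least `1 − δ` every upper-hull vertex is recorded as a maximizer
of some sampled functional. -/
theorem sampling_records_upper_hull_vertices (n N K : ℕ) [NeZero N]
    (δ : ℝ) (hδ : 0 < δ)
    (S : Finset (ℝ × EuclideanSpace ℝ (Fin n))) (hS : S.Nonempty)
    (v : Fin N → ℝ × EuclideanSpace ℝ (Fin n)) (hvinj : Function.Injective v)
    (hvrange : Set.range v =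
      Set.extremePoints ℝ (convexHull ℝ (S : Set (ℝ × EuclideanSpace ℝ (Fin n)))) ∩
        upperHull (convexHull ℝ (S : Set (ℝ × EuclideanSpace ℝ (Fin n)))))
    (hω : ∀ k : Fin N, 0 < solidAngle (truncNormalCone
      (convexHull ℝ (S : Set (ℝ × EuclideanSpace ℝ (Fin n)))) (v k))) :
    (((Measure.pi fun _ : Fin K => stdGaussianProd n)
        {g : Fin K → ℝ × EuclideanSpace ℝ (Fin n) | ∃ k : Fin N, ∀ j : Fin K,
          flipSample (g j) ∉ normalCone
            (convexHull ℝ (S : Set (ℝ × EuclideanSpace ℝ (Fin n)))) (v k)}).toReal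
      ≤ N * (Finset.univ.sup' Finset.univ_nonempty (fun k : Fin N =>
          1 - solidAngle (truncNormalCone
            (convexHull ℝ (S : Set (ℝ × EuclideanSpace ℝ (Fin n)))) (v k)))) ^ K) ∧
    ((K : ℝ) ≥
        (1 / Real.log (1 / Finset.univ.sup' Finset.univ_nonempty (fun k : Fin N =>
          1 - solidAngle (truncNormalCone
            (convexHull ℝ (S : Set (ℝ × EuclideanSpace ℝ (Fin n)))) (v k))))) *
          Real.log (N / δ) →
      1 - δ ≤ ((Measure.pi fun _ : Fin K => stdGaussianProd n)
        {g : Fin K → ℝ × EuclideanSpace ℝ (Fin n) | ∀ k : Fin N, ∃ j : Fin K,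
          flipSample (g j) ∈ normalCone
            (convexHull ℝ (S : Set (ℝ × EuclideanSpace ℝ (Fin n)))) (v k)}).toReal) :=
  sampling_records_upper_hull_vertices_general n N K δ hδ S v hω
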